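/- arXiv:1308.0451 — 2 statements merged into one kernel-verified Lean document; each statement's English description precedes it below -/
import Mathlib

section
/- Let m-1 \leq \alpha < m and f \in C^m[0,1]. Then the left Caputo fractional derivatives of the Bernstein polynomials of f converge uniformly on [0,1] to the left Caputo fractional derivative of f: \sup_{x\in[0,1]} |{}^C_0D_x^\alpha B_n(f;x) - {}^C_0D_x^\alpha f(x)| \to 0 as n \to \infty. -/
/-- The `n`-th Bernstein polynomial of `f`. -/
noncomputable def bern (n : ℕ) (f : ℝ → ℝ) (x : ℝ) : ℝ :=
  ∑ i ∈ Finset.range (n + 1),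
    (n.choose i : ℝ) * f ((i : ℝ) / n) * x ^ i * (1 - x) ^ (n - i)

/-- The left Caputo fractional derivative of order `α` (with `m - 1 ≤ α < m`)
based at `0` (derivatives taken within `[0,1]`). -/
noncomputable def caputo (m : ℕ) (α : ℝ) (f : ℝ → ℝ) (x : ℝ) : ℝ :=
  (1 / Real.Gamma ((m : ℝ) - α)) *
    ∫ τ in (0 : ℝ)..x, (x - τ) ^ ((m : ℝ) - α - 1) * iteratedDerivWithin m f (Set.Icc 0 1) τ

/-!
The `m`-th derivative of `B_n f` is `n (n - 1) ⋯ (n - m + 1)` times the Bernstein polynomial of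
degree `N = n - m` whose coefficients are the `m`-th forward differences, with step `1 / n`, of
the samples `f (i / n)`. By the fundamental theorem of calculus, `n ^ m` times such a difference
differs from `f⁽ᵐ⁾ (i / N)` by at most the oscillation of `f⁽ᵐ⁾` over `[i / n, (i + m) / n]`, an
interval within `m / n` of `i / N`; moreover `n (n - 1) ⋯ (n - m + 1) / n ^ m → 1`. Hence
`(B_n f)⁽ᵐ⁾` is uniformly close to `B_N f⁽ᵐ⁾`, which tends uniformly to `f⁽ᵐ⁾` by Bernstein's
theorem. The Caputo derivative integrates `f⁽ᵐ⁾` against the kernel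
`(x - τ) ^ (m - α - 1) / Γ(m - α)`, whose mass on `[0, x] ⊆ [0, 1]` is at most `1 / Γ(m - α + 1)`,
so uniform convergence passes to it.
-/

open Finset Set Filter Topology MeasureTheory
open scoped fwdDiff

noncomputable def bernsteinSum (n : ℕ) (g : ℕ → ℝ) (x : ℝ) : ℝ :=
  ∑ i ∈ range (n + 1), (n.choose i : ℝ) * g i * x ^ i * (1 - x) ^ (n - i)

theorem contDiff_bernsteinSum (n : ℕ) (g : ℕ → ℝ) : ContDiff ℝ ⊤ (bernsteinSum n g) :=
  ContDiff.sum fun _ _ ↦ (contDiff_const.mul (contDiff_id.pow _)).mul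
    ((contDiff_const.sub contDiff_id).pow _)

theorem hasDerivAt_bernsteinSum_succ (n : ℕ) (g : ℕ → ℝ) (x : ℝ) :
    HasDerivAt (bernsteinSum (n + 1) g) ((n + 1) * bernsteinSum n (Δ_[1] g) x) x := by
  have hterm : ∀ i ∈ range (n + 1 + 1), HasDerivAt
      (fun y ↦ ((n + 1).choose i : ℝ) * g i * y ^ i * (1 - y) ^ (n + 1 - i))
      (((n + 1).choose i : ℝ) * g i * (i * x ^ (i - 1)) * (1 - x) ^ (n + 1 - i)
        - ((n + 1).choose i : ℝ) * g i * x ^ i * ((n + 1 - i : ℕ) * (1 - x) ^ (n - i))) x := by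
    intro i _
    have h := (((hasDerivAt_pow i x).const_mul (((n + 1).choose i : ℝ) * g i)).mul
      ((hasDerivAt_pow (n + 1 - i) (1 - x)).comp x ((hasDerivAt_id x).const_sub 1)))
    rw [show n + 1 - i - 1 = n - i by omega] at h
    exact h.congr_deriv (by simp only [Function.comp_apply]; ring)
  refine (HasDerivAt.fun_sum hterm).congr_deriv ?_
  rw [sum_sub_distrib, sum_range_succ', sum_range_succ _ (n + 1), Nat.sub_self]
  simp only [bernsteinSum, fwdDiff, mul_sum, Nat.cast_zero, zero_mul, mul_zero, add_zero,
    ← sum_sub_distrib]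
  refine sum_congr rfl fun j _ ↦ ?_
  have hup : ((n + 1).choose (j + 1) : ℝ) * (j + 1) = (n + 1) * n.choose j := by
    exact_mod_cast (Nat.add_one_mul_choose_eq n j).symm
  have hdown : ((n + 1).choose j : ℝ) * (n + 1 - j : ℕ) = (n + 1) * n.choose j := by
    exact_mod_cast (Nat.choose_mul_succ_eq n j).symm.trans (mul_comm _ _)
  rw [show n + 1 - (j + 1) = n - j by omega, Nat.add_sub_cancel]
  push_cast
  linear_combination (g (j + 1) * x ^ j * (1 - x) ^ (n - j)) * hup
    - (g j * x ^ j * (1 - x) ^ (n - j)) * hdown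

theorem iteratedDeriv_bernsteinSum (k n : ℕ) (g : ℕ → ℝ) :
    iteratedDeriv k (bernsteinSum (n + k) g) =
      fun x ↦ ((n + k).descFactorial k : ℝ) * bernsteinSum n (Δ_[1] ^[k] g) x := by
  induction k generalizing g with
  | zero => simp
  | succ k ih =>
    have hderiv : deriv (bernsteinSum (n + k + 1) g) =
        fun x ↦ (n + k + 1 : ℝ) * bernsteinSum (n + k) (Δ_[1] g) x := by
      funext x
      exact_mod_cast (hasDerivAt_bernsteinSum_succ (n + k) g x).deriv
    funext x
    rw [← add_assoc, iteratedDeriv_succ', hderiv, iteratedDeriv_const_mul _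
      ((contDiff_bernsteinSum _ _).of_le le_top).contDiffAt, ih, Nat.succ_descFactorial_succ,
      Function.iterate_succ_apply]
    push_cast
    ring

theorem bernsteinSum_one (n : ℕ) (x : ℝ) : bernsteinSum n 1 x = 1 := by
  have h := (add_pow x (1 - x) n).symm
  rw [add_sub_cancel, one_pow] at h
  rw [← h, bernsteinSum]
  exact sum_congr rfl fun i _ ↦ by simp only [Pi.one_apply]; ring

theorem bernsteinSum_sub (n : ℕ) (g g' : ℕ → ℝ) (x : ℝ) :
    bernsteinSum n g x - bernsteinSum n g' x = bernsteinSum n (g - g') x := by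
  simp only [bernsteinSum, ← sum_sub_distrib, Pi.sub_apply]
  exact sum_congr rfl fun i _ ↦ by ring

theorem abs_bernsteinSum_le {n : ℕ} {e : ℕ → ℝ} {ε x : ℝ} (hx : x ∈ Icc (0 : ℝ) 1)
    (he : ∀ i ≤ n, |e i| ≤ ε) : |bernsteinSum n e x| ≤ ε := by
  have hbasis : ∀ i, 0 ≤ (n.choose i : ℝ) * x ^ i * (1 - x) ^ (n - i) := fun i ↦
    mul_nonneg (mul_nonneg (Nat.cast_nonneg _) (pow_nonneg hx.1 _))
      (pow_nonneg (sub_nonneg.mpr hx.2) _)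
  calc |bernsteinSum n e x|
      ≤ ∑ i ∈ range (n + 1), |e i| * ((n.choose i : ℝ) * x ^ i * (1 - x) ^ (n - i)) := by
        refine (abs_sum_le_sum_abs _ _).trans (le_of_eq (sum_congr rfl fun i _ ↦ ?_))
        rw [show (n.choose i : ℝ) * e i * x ^ i * (1 - x) ^ (n - i)
          = e i * ((n.choose i : ℝ) * x ^ i * (1 - x) ^ (n - i)) by ring, abs_mul,
          abs_of_nonneg (hbasis i)]
    _ ≤ ∑ i ∈ range (n + 1), ε * ((n.choose i : ℝ) * x ^ i * (1 - x) ^ (n - i)) :=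
        sum_le_sum fun i hi ↦ mul_le_mul_of_nonneg_right
          (he i (Nat.lt_succ_iff.mp (mem_range.mp hi))) (hbasis i)
    _ = ε * bernsteinSum n 1 x := by
        rw [bernsteinSum, mul_sum]
        exact sum_congr rfl fun i _ ↦ by simp only [Pi.one_apply]; ring
    _ = ε := by rw [bernsteinSum_one, mul_one]

theorem tendstoUniformlyOn_bernsteinSum {F : ℝ → ℝ} (hF : ContinuousOn F (Icc 0 1)) :
    TendstoUniformlyOn (fun n x ↦ bernsteinSum n (fun i ↦ F (i / n)) x) F atTop (Icc 0 1) := by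
  let F' : C(unitInterval, ℝ) := ⟨(Icc (0 : ℝ) 1).domRestrict F, hF.domRestrict⟩
  have h := ContinuousMap.tendsto_iff_tendstoUniformly.mp (bernsteinApproximation_uniform F')
  rw [tendstoUniformlyOn_iff_tendstoUniformly_comp_coe]
  refine (tendstoUniformly_congr (Eventually.of_forall fun n ↦ funext fun x ↦ ?_)).mp h
  rw [bernsteinApproximation.apply, bernsteinSum, ← Fin.sum_univ_eq_sum_range
    (fun i ↦ (n.choose i : ℝ) * F (i / n) * x ^ i * (1 - x) ^ (n - i))]
  refine sum_congr rfl fun k _ ↦ ?_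
  simp only [bernstein_apply, bernstein.z, smul_eq_mul, F', ContinuousMap.coe_mk,
    Set.domRestrict_apply]
  ring

theorem fwdDiff_iter_comp_div_natCast {G : Type*} [AddCommGroup G] (φ : ℝ → G) (n k i : ℕ) :
    Δ_[1] ^[k] (fun j : ℕ ↦ φ (j / n)) i = Δ_[(1 : ℝ) / n] ^[k] φ (i / n) := by
  simp only [fwdDiff_iter_eq_sum_shift, nsmul_eq_mul, Nat.cast_id, Nat.cast_add, mul_one]
  congr! 3
  ring

theorem continuousOn_fwdDiff_iter {φ : ℝ → ℝ} {a b h : ℝ} (hφ : ContinuousOn φ (Icc a b))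
    (hh : 0 ≤ h) (k : ℕ) : ContinuousOn (Δ_[h] ^[k] φ) (Icc a (b - k * h)) := by
  induction k with
  | zero => simpa using hφ
  | succ k ih =>
    simp only [Function.iterate_succ', Function.comp_apply]
    refine (ih.comp (continuous_add_const h).continuousOn fun u hu ↦ ?_).sub (ih.mono ?_)
    · push_cast at hu
      exact ⟨by linarith [hu.1], by linarith [hu.2]⟩
    · push_cast
      exact Icc_subset_Icc le_rfl (by nlinarith)

theorem hasDerivAt_fwdDiff_iter {φ φ' : ℝ → ℝ} {h : ℝ} (hh : 0 ≤ h) (k : ℕ) {t : ℝ}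
    (hφ : ∀ u ∈ Icc t (t + k * h), HasDerivAt φ (φ' u) u) :
    HasDerivAt (Δ_[h] ^[k] φ) (Δ_[h] ^[k] φ' t) t := by
  induction k generalizing t with
  | zero => simpa using hφ t (by simp)
  | succ k ih =>
    simp only [Function.iterate_succ', Function.comp_apply]
    refine HasDerivAt.sub (HasDerivAt.comp_add_const _ _ (ih fun u hu ↦ hφ u ?_))
      (ih fun u hu ↦ hφ u ?_)
    · push_cast
      exact ⟨by linarith [hu.1], by linarith [hu.2]⟩
    · push_cast
      exact ⟨hu.1, by nlinarith [hu.2]⟩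

theorem fwdDiff_iter_succ_eq_integral {φ : ℝ → ℝ} {a b h t : ℝ} {k : ℕ}
    (hφ : ContDiffOn ℝ (k + 1) φ (Icc a b)) (hh : 0 < h) (hat : a ≤ t)
    (htb : t + (k + 1) * h ≤ b) :
    Δ_[h] ^[k + 1] φ t = ∫ s in t..t + h, Δ_[h] ^[k] (derivWithin φ (Icc a b)) s := by
  have hsub : Icc t (t + h) ⊆ Icc a (b - k * h) := Icc_subset_Icc hat (by linarith)
  have hcont : ContinuousOn (Δ_[h] ^[k] φ) (Icc t (t + h)) :=
    (continuousOn_fwdDiff_iter hφ.continuousOn hh.le k).mono hsub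
  have hcont' : ContinuousOn (Δ_[h] ^[k] (derivWithin φ (Icc a b))) (Icc t (t + h)) :=
    (continuousOn_fwdDiff_iter (hφ.continuousOn_derivWithin (uniqueDiffOn_Icc (by nlinarith))
      (by simp)) hh.le k).mono hsub
  have hderiv : ∀ u ∈ Ioo a b, HasDerivAt φ (derivWithin φ (Icc a b) u) u := fun u hu ↦
    ((hφ.differentiableOn (by simp) u (Ioo_subset_Icc_self hu)).hasDerivWithinAt).hasDerivAt
      (Icc_mem_nhds hu.1 hu.2)
  rw [Function.iterate_succ_apply']
  refine (intervalIntegral.integral_eq_sub_of_hasDeriv_right_of_le (by linarith) hcont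
    (fun s hs ↦ (hasDerivAt_fwdDiff_iter hh.le k fun u hu ↦
      hderiv u ⟨by linarith [hu.1, hs.1], by nlinarith [hu.2, hs.2]⟩).hasDerivWithinAt)
    (hcont'.intervalIntegrable_of_Icc (by linarith))).symm

theorem abs_fwdDiff_iter_sub_le {φ : ℝ → ℝ} {a b h t c B : ℝ} {k : ℕ}
    (hφ : ContDiffOn ℝ k φ (Icc a b)) (hh : 0 < h) (hat : a ≤ t) (htb : t + k * h ≤ b)
    (hB : ∀ ξ ∈ Icc t (t + k * h), |iteratedDerivWithin k φ (Icc a b) ξ - c| ≤ B) :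
    |Δ_[h] ^[k] φ t - h ^ k * c| ≤ h ^ k * B := by
  induction k generalizing φ t with
  | zero => simpa using hB t (by simp)
  | succ k ih =>
    push_cast at hφ htb hB
    have hU : UniqueDiffOn ℝ (Icc a b) := uniqueDiffOn_Icc (by nlinarith)
    have hφ' : ContDiffOn ℝ k (derivWithin φ (Icc a b)) (Icc a b) := hφ.derivWithin hU le_rfl
    have hint : IntervalIntegrable (Δ_[h] ^[k] (derivWithin φ (Icc a b))) volume t (t + h) :=
      ((continuousOn_fwdDiff_iter hφ'.continuousOn hh.le k).mono
        (Icc_subset_Icc hat (by linarith))).intervalIntegrable_of_Icc (by linarith)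
    have hbound : ∀ s ∈ uIoc t (t + h),
        ‖Δ_[h] ^[k] (derivWithin φ (Icc a b)) s - h ^ k * c‖ ≤ h ^ k * B := by
      intro s hs
      rw [uIoc_of_le (by linarith)] at hs
      refine ih hφ' (by linarith [hs.1]) (by nlinarith [hs.2]) fun ξ hξ ↦ ?_
      rw [← iteratedDerivWithin_succ']
      exact hB ξ ⟨by linarith [hξ.1, hs.1], by nlinarith [hξ.2, hs.2]⟩
    rw [fwdDiff_iter_succ_eq_integral hφ hh hat htb]
    calc |(∫ s in t..t + h, Δ_[h] ^[k] (derivWithin φ (Icc a b)) s) - h ^ (k + 1) * c|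
        = ‖∫ s in t..t + h, (Δ_[h] ^[k] (derivWithin φ (Icc a b)) s - h ^ k * c)‖ := by
          rw [intervalIntegral.integral_sub hint intervalIntegrable_const,
            intervalIntegral.integral_const, add_sub_cancel_left, smul_eq_mul, pow_succ,
            Real.norm_eq_abs]
          ring_nf
      _ ≤ h ^ k * B * |t + h - t| := intervalIntegral.norm_integral_le_of_norm_le_const hbound
      _ = h ^ (k + 1) * B := by rw [add_sub_cancel_left, abs_of_pos hh]; ring

theorem tendsto_descFactorial_div_pow (m : ℕ) :
    Tendsto (fun n : ℕ ↦ (n.descFactorial m : ℝ) / n ^ m) atTop (𝓝 1) := by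
  have hprod : Tendsto (fun n : ℕ ↦ ∏ i ∈ range m, (1 - (i : ℝ) / n)) atTop (𝓝 1) := by
    simpa using tendsto_finsetProd (range m) fun i _ ↦
      (tendsto_const_nhds (x := (1 : ℝ))).sub (tendsto_const_div_atTop_nhds_zero_nat (i : ℝ))
  refine hprod.congr' ((eventually_gt_atTop m).mono fun n hn ↦ ?_)
  dsimp only
  have hn0 : (n : ℝ) ≠ 0 := by exact_mod_cast (Nat.zero_le m).trans_lt hn |>.ne'
  rw [Nat.descFactorial_eq_prod_range, Nat.cast_prod,
    show (n : ℝ) ^ m = ∏ _i ∈ range m, (n : ℝ) by simp, ← prod_div_distrib]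
  refine prod_congr rfl fun i hi ↦ ?_
  rw [Nat.cast_sub (by linarith [mem_range.mp hi])]
  field_simp

theorem abs_sub_div_le_of_mem_Icc {N m i : ℕ} (hi : i ≤ N) {ξ : ℝ}
    (hξ : ξ ∈ Icc ((i : ℝ) / (N + m)) (i / (N + m) + m / (N + m))) :
    |ξ - i / N| ≤ m / (N + m) := by
  rcases Nat.eq_zero_or_pos N with rfl | hN
  · obtain rfl : i = 0 := Nat.le_zero.mp hi
    simp only [Nat.cast_zero, zero_div, zero_add, sub_zero] at hξ ⊢
    rw [abs_of_nonneg hξ.1]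
    exact hξ.2
  have hN' : (0 : ℝ) < N := by exact_mod_cast hN
  have hgap : (i : ℝ) / N - i / (N + m) = i / N * (m / (N + m)) := by field_simp; ring
  have hiN : (i : ℝ) / N ≤ 1 := div_le_one_of_le₀ (by exact_mod_cast hi) hN'.le
  have hgap_le : (i : ℝ) / N * (m / (N + m)) ≤ m / (N + m) :=
    mul_le_of_le_one_left (by positivity) hiN
  have hgap_nonneg : 0 ≤ (i : ℝ) / N * (m / (N + m)) := by positivity
  rw [abs_le]
  constructor <;> linarith [hξ.1, hξ.2]

theorem abs_descFactorial_mul_fwdDiff_iter_sub_le {f : ℝ → ℝ} {m N i : ℕ}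
    (hf : ContDiffOn ℝ m f (Icc 0 1)) (hN : 0 < N) (hi : i ≤ N) {ω M : ℝ}
    (hM : ∀ x ∈ Icc (0 : ℝ) 1, |iteratedDerivWithin m f (Icc 0 1) x| ≤ M)
    (hω : ∀ ξ ∈ Icc (0 : ℝ) 1, |ξ - i / N| ≤ m / (N + m) →
      |iteratedDerivWithin m f (Icc 0 1) ξ - iteratedDerivWithin m f (Icc 0 1) (i / N)| ≤ ω) :
    |((N + m).descFactorial m : ℝ) * Δ_[1 / ((N : ℝ) + m)] ^[m] f (i / (N + m))
        - iteratedDerivWithin m f (Icc 0 1) (i / N)|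
      ≤ ω + |((N + m).descFactorial m : ℝ) / (N + m) ^ m - 1| * M := by
  set F := iteratedDerivWithin m f (Icc 0 1)
  set D : ℝ := ((N + m).descFactorial m : ℝ)
  have hN' : (0 : ℝ) < N := by exact_mod_cast hN
  have hiI : (i : ℝ) / N ∈ Icc (0 : ℝ) 1 :=
    ⟨by positivity, div_le_one_of_le₀ (by exact_mod_cast hi) hN'.le⟩
  have hω0 : 0 ≤ ω :=
    (abs_nonneg _).trans (hω _ hiI (by simp only [sub_self, abs_zero]; positivity))
  have hD : 0 ≤ D := Nat.cast_nonneg _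
  have hDle : D * (1 / (N + m)) ^ m ≤ 1 := by
    rw [one_div_pow, mul_one_div, div_le_one (by positivity)]
    have h := (Nat.cast_le (α := ℝ)).mpr (Nat.descFactorial_le_pow (N + m) m)
    push_cast at h
    exact h
  have hstencil : (i : ℝ) / (N + m) + m * (1 / (N + m)) ≤ 1 := by
    rw [mul_one_div, ← add_div, div_le_one (by positivity)]
    linarith [(by exact_mod_cast hi : (i : ℝ) ≤ N)]
  have hdiff := abs_fwdDiff_iter_sub_le (c := F (i / N)) (B := ω) hf (by positivity)
    (by positivity) hstencil fun ξ hξ ↦ by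
      rw [mul_one_div] at hξ
      exact hω ξ ⟨(by positivity : (0 : ℝ) ≤ i / (N + m)).trans hξ.1, hξ.2.trans
        (by rwa [mul_one_div] at hstencil)⟩ (abs_sub_div_le_of_mem_Icc hi hξ)
  calc |D * Δ_[1 / ((N : ℝ) + m)] ^[m] f (i / (N + m)) - F (i / N)|
      = |D * (Δ_[1 / ((N : ℝ) + m)] ^[m] f (i / (N + m)) - (1 / (N + m)) ^ m * F (i / N))
          + (D / (N + m) ^ m - 1) * F (i / N)| := by ring_nf
    _ ≤ D * ((1 / (N + m)) ^ m * ω) + |D / (N + m) ^ m - 1| * M := by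
        refine (abs_add_le _ _).trans (add_le_add ?_ ?_)
        · rw [abs_mul, abs_of_nonneg hD]
          exact mul_le_mul_of_nonneg_left hdiff hD
        · rw [abs_mul]
          exact mul_le_mul_of_nonneg_left (hM _ hiI) (abs_nonneg _)
    _ ≤ ω + |D / (N + m) ^ m - 1| * M := by nlinarith

theorem eventually_abs_descFactorial_mul_fwdDiff_iter_sub_le {m : ℕ} {f : ℝ → ℝ}
    (hf : ContDiffOn ℝ m f (Icc 0 1)) {ε : ℝ} (hε : 0 < ε) :
    ∀ᶠ n : ℕ in atTop, ∀ i ≤ n - m,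
      |(n.descFactorial m : ℝ) * Δ_[(1 : ℝ) / n] ^[m] f (i / n)
        - iteratedDerivWithin m f (Icc 0 1) (i / (n - m : ℕ))| ≤ ε := by
  have hF : ContinuousOn (iteratedDerivWithin m f (Icc 0 1)) (Icc 0 1) :=
    hf.continuousOn_iteratedDerivWithin le_rfl (uniqueDiffOn_Icc zero_lt_one)
  obtain ⟨M, hM⟩ := isCompact_Icc.exists_bound_of_continuousOn hF
  obtain ⟨δ, hδ, hUC⟩ := Metric.uniformContinuousOn_iff.mp
    (isCompact_Icc.uniformContinuousOn_of_continuous hF) (ε / 2) (half_pos hε)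
  have hratio : ∀ᶠ n : ℕ in atTop, |(n.descFactorial m : ℝ) / n ^ m - 1| * M < ε / 2 := by
    have h := ((tendsto_descFactorial_div_pow m).sub_const 1).abs.mul_const M
    rw [sub_self, abs_zero, zero_mul] at h
    exact h.eventually (gt_mem_nhds (half_pos hε))
  have hmesh : ∀ᶠ n : ℕ in atTop, (m : ℝ) / n < δ :=
    (tendsto_const_div_atTop_nhds_zero_nat (m : ℝ)).eventually (gt_mem_nhds hδ)
  filter_upwards [hratio, hmesh, eventually_gt_atTop m] with n hratio hmesh hn i hi
  obtain ⟨N, rfl⟩ := Nat.exists_eq_add_of_le' hn.le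
  rw [Nat.add_sub_cancel] at hi ⊢
  push_cast at hratio hmesh ⊢
  have hest := abs_descFactorial_mul_fwdDiff_iter_sub_le hf (by omega) hi hM
    fun ξ hξ hclose ↦ (hUC ξ hξ _ ⟨by positivity, div_le_one_of_le₀ (by exact_mod_cast hi)
      (Nat.cast_nonneg N)⟩ (by rw [Real.dist_eq]; exact hclose.trans_lt hmesh)).le
  linarith

theorem iteratedDeriv_bern_add (f : ℝ → ℝ) (m N : ℕ) (x : ℝ) :
    iteratedDeriv m (bern (N + m) f) x =
      bernsteinSum N (fun i ↦ ((N + m).descFactorial m : ℝ) *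
        Δ_[(1 : ℝ) / (N + m : ℕ)] ^[m] f (i / (N + m : ℕ))) x := by
  rw [show bern (N + m) f = bernsteinSum (N + m) fun i ↦ f (i / (N + m : ℕ)) from rfl,
    iteratedDeriv_bernsteinSum]
  simp only [bernsteinSum, mul_sum, fwdDiff_iter_comp_div_natCast]
  exact sum_congr rfl fun i _ ↦ by ring

theorem tendstoUniformlyOn_iteratedDeriv_bern {m : ℕ} {f : ℝ → ℝ}
    (hf : ContDiffOn ℝ m f (Icc 0 1)) :
    TendstoUniformlyOn (fun n ↦ iteratedDeriv m (bern n f))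
      (iteratedDerivWithin m f (Icc 0 1)) atTop (Icc 0 1) := by
  set F := iteratedDerivWithin m f (Icc 0 1)
  have hB := tendstoUniformlyOn_bernsteinSum
    (hf.continuousOn_iteratedDerivWithin le_rfl (uniqueDiffOn_Icc zero_lt_one))
  rw [Metric.tendstoUniformlyOn_iff] at hB ⊢
  intro ε hε
  filter_upwards [eventually_ge_atTop m,
    (tendsto_sub_atTop_nat m).eventually (hB _ (half_pos hε)),
    eventually_abs_descFactorial_mul_fwdDiff_iter_sub_le hf (half_pos hε)]
    with n hn hbern hdiff x hx
  obtain ⟨N, rfl⟩ := Nat.exists_eq_add_of_le' hn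
  rw [Nat.add_sub_cancel] at hbern hdiff
  have herr := abs_bernsteinSum_le hx hdiff
  rw [iteratedDeriv_bern_add]
  calc dist (F x) (bernsteinSum N _ x)
      ≤ dist (F x) (bernsteinSum N (fun i ↦ F (i / N)) x)
        + dist (bernsteinSum N (fun i ↦ F (i / N)) x) (bernsteinSum N _ x) :=
        dist_triangle _ _ _
    _ < ε / 2 + ε / 2 := by
        refine add_lt_add_of_lt_of_le (hbern x hx) ?_
        rw [Real.dist_eq, abs_sub_comm, bernsteinSum_sub]
        exact herr
    _ = ε := add_halves ε

section RiemannLiouvilleKernel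

variable {β x : ℝ}

theorem intervalIntegrable_rpow_kernel (hβ : 0 < β) :
    IntervalIntegrable (fun τ ↦ (x - τ) ^ (β - 1)) volume 0 x := by
  simpa using ((intervalIntegral.intervalIntegrable_rpow' (a := 0) (b := x)
    (by linarith : -1 < β - 1)).comp_sub_left x).symm

theorem integral_rpow_kernel (hβ : 0 < β) :
    ∫ τ in (0 : ℝ)..x, (x - τ) ^ (β - 1) = x ^ β / β := by
  rw [intervalIntegral.integral_comp_sub_left (fun u ↦ u ^ (β - 1)) x, sub_self, sub_zero,
    integral_rpow (Or.inl (by linarith)), sub_add_cancel, Real.zero_rpow hβ.ne', sub_zero]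

theorem intervalIntegrable_rpow_kernel_mul (hβ : 0 < β) (hx : 0 ≤ x) {u : ℝ → ℝ}
    (hu : ContinuousOn u (Icc 0 x)) :
    IntervalIntegrable (fun τ ↦ (x - τ) ^ (β - 1) * u τ) volume 0 x :=
  (intervalIntegrable_rpow_kernel hβ).mul_continuousOn (by rwa [uIcc_of_le hx])

theorem abs_integral_rpow_kernel_mul_le (hβ : 0 < β) (hx : 0 ≤ x) {u : ℝ → ℝ} {δ : ℝ}
    (hu : ∀ τ ∈ Icc 0 x, |u τ| ≤ δ) :
    |∫ τ in (0 : ℝ)..x, (x - τ) ^ (β - 1) * u τ| ≤ δ * x ^ β / β := by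
  rw [← Real.norm_eq_abs]
  calc ‖∫ τ in (0 : ℝ)..x, (x - τ) ^ (β - 1) * u τ‖
      ≤ ∫ τ in (0 : ℝ)..x, (x - τ) ^ (β - 1) * δ := by
        refine intervalIntegral.norm_integral_le_of_norm_le hx (ae_of_all _ fun τ hτ ↦ ?_)
          ((intervalIntegrable_rpow_kernel hβ).mul_const δ)
        have hker : 0 ≤ (x - τ) ^ (β - 1) := Real.rpow_nonneg (by linarith [hτ.2]) _
        rw [Real.norm_eq_abs, abs_mul, abs_of_nonneg hker]
        exact mul_le_mul_of_nonneg_left (hu τ (Ioc_subset_Icc_self hτ)) hker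
    _ = δ * x ^ β / β := by
        rw [intervalIntegral.integral_mul_const, integral_rpow_kernel hβ]
        ring

end RiemannLiouvilleKernel

theorem tendstoUniformlyOn_caputo {ι : Type*} {p : Filter ι} {m : ℕ} {α : ℝ} (hα : α < m)
    {g : ι → ℝ → ℝ} {f : ℝ → ℝ}
    (hg : ∀ n, ContinuousOn (iteratedDerivWithin m (g n) (Icc 0 1)) (Icc 0 1))
    (hf : ContinuousOn (iteratedDerivWithin m f (Icc 0 1)) (Icc 0 1))
    (hconv : TendstoUniformlyOn (fun n ↦ iteratedDerivWithin m (g n) (Icc 0 1))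
      (iteratedDerivWithin m f (Icc 0 1)) p (Icc 0 1)) :
    TendstoUniformlyOn (fun n ↦ caputo m α (g n)) (caputo m α f) p (Icc 0 1) := by
  unfold caputo
  set β : ℝ := m - α
  have hβ : 0 < β := sub_pos.mpr hα
  have hΓ : 0 < Real.Gamma β := Real.Gamma_pos_of_pos hβ
  rw [Metric.tendstoUniformlyOn_iff] at hconv ⊢
  intro ε hε
  filter_upwards [hconv (ε * Real.Gamma β * β / 2) (by positivity)] with n hn x hx
  have hsub : Icc 0 x ⊆ Icc (0 : ℝ) 1 := Icc_subset_Icc_right hx.2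
  rw [Real.dist_eq, ← mul_sub, ← intervalIntegral.integral_sub
    (intervalIntegrable_rpow_kernel_mul hβ hx.1 (hf.mono hsub))
    (intervalIntegrable_rpow_kernel_mul hβ hx.1 ((hg n).mono hsub))]
  simp_rw [← mul_sub]
  rw [abs_mul, abs_of_pos (one_div_pos.mpr hΓ)]
  calc 1 / Real.Gamma β * |∫ τ in (0 : ℝ)..x, (x - τ) ^ (β - 1) *
        (iteratedDerivWithin m f (Icc 0 1) τ - iteratedDerivWithin m (g n) (Icc 0 1) τ)|
      ≤ 1 / Real.Gamma β * (ε * Real.Gamma β * β / 2 * x ^ β / β) := by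
        gcongr
        exact abs_integral_rpow_kernel_mul_le hβ hx.1 fun τ hτ ↦ (hn τ (hsub hτ)).le
    _ ≤ 1 / Real.Gamma β * (ε * Real.Gamma β * β / 2 * 1 / β) := by
        gcongr
        exact Real.rpow_le_one hx.1 hx.2 hβ.le
    _ < ε := by
        field_simp
        linarith

theorem caputo_bernstein_uniform_convergence_general (m : ℕ) (α : ℝ)
    (hα₂ : α < m)
    (f : ℝ → ℝ) (hf : ContDiffOn ℝ m f (Set.Icc 0 1)) :
    TendstoUniformlyOn (fun n x => caputo m α (bern n f) x)
      (fun x => caputo m α f x) Filter.atTop (Set.Icc 0 1) := by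
  have hU : UniqueDiffOn ℝ (Icc (0 : ℝ) 1) := uniqueDiffOn_Icc zero_lt_one
  have hbern : ∀ n, ContDiff ℝ m (bern n f) :=
    fun n ↦ (contDiff_bernsteinSum n _).of_le le_top
  have hderiv : TendstoUniformlyOn (fun n ↦ iteratedDerivWithin m (bern n f) (Icc 0 1))
      (iteratedDerivWithin m f (Icc 0 1)) atTop (Icc 0 1) :=
    (tendstoUniformlyOn_iteratedDeriv_bern hf).congr (Eventually.of_forall fun n x hx ↦
      (iteratedDerivWithin_eq_iteratedDeriv hU (hbern n).contDiffAt hx).symm)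
  exact tendstoUniformlyOn_caputo hα₂
    (fun n ↦ (hbern n).contDiffOn.continuousOn_iteratedDerivWithin le_rfl hU)
    (hf.continuousOn_iteratedDerivWithin le_rfl hU) hderiv

/-- For `f ∈ Cᵐ[0,1]` and `m - 1 ≤ α < m`, the left Caputo fractional derivatives
of the Bernstein polynomials of `f` converge uniformly on `[0,1]` to the left
Caputo fractional derivative of `f`. -/
theorem caputo_bernstein_uniform_convergence (m : ℕ) (hm : 1 ≤ m) (α : ℝ)
    (hα₁ : (m : ℝ) - 1 ≤ α) (hα₂ : α < m)
    (f : ℝ → ℝ) (hf : ContDiffOn ℝ m f (Set.Icc 0 1)) :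
    TendstoUniformlyOn (fun n x => caputo m α (bern n f) x)
      (fun x => caputo m α f x) Filter.atTop (Set.Icc 0 1) :=
  caputo_bernstein_uniform_convergence_general m α hα₂ f hf
end

section
/- Let \alpha > 0 and f \in C[0,1]. Then the right Riemann--Liouville fractional integrals of the Bernstein polynomials of f converge uniformly on [0,1] to the right fractional integral of f: \sup_{x\in[0,1]} |{}_xI_1^\alpha B_n(f;x) - {}_xI_1^\alpha f(x)| \to 0 as n \to \infty. -/
/-- The right Riemann--Liouville fractional integral of order `α > 0` based at `1`. -/
noncomputable def rlIntRight (α : ℝ) (f : ℝ → ℝ) (x : ℝ) : ℝ :=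
  (1 / Real.Gamma α) * ∫ τ in x..(1 : ℝ), (τ - x) ^ (α - 1) * f τ

/-!
Since `∫_x^1 (τ - x)^(α-1) dτ = (1 - x)^α / α`, the operator `ₓI_1^α` is linear and bounded on
`C[0,1]`, with `|ₓI_1^α g(x)| ≤ ‖g‖_∞ (1 - x)^α / Γ(α + 1)`. It therefore carries uniform
convergence to uniform convergence, and Bernstein's theorem `B_n f → f` uniformly on `[0,1]`
finishes the proof.
-/

open MeasureTheory Set Filter unitInterval

section RiemannLiouville

variable {α : ℝ}

lemma intervalIntegrable_sub_rpow (hα : 0 < α) (x b : ℝ) :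
    IntervalIntegrable (fun τ => (τ - x) ^ (α - 1)) volume x b := by
  simpa using (intervalIntegral.intervalIntegrable_rpow' (a := 0) (b := b - x)
    (by linarith : (-1 : ℝ) < α - 1)).comp_sub_right x

lemma integral_sub_rpow (hα : 0 < α) (x b : ℝ) :
    ∫ τ in x..b, (τ - x) ^ (α - 1) = (b - x) ^ α / α := by
  rw [intervalIntegral.integral_comp_sub_right (fun t => t ^ (α - 1)) x,
    integral_rpow (Or.inl (by linarith))]
  simp [Real.zero_rpow hα.ne']

lemma rlIntRight_sub (hα : 0 < α) {g h : ℝ → ℝ} {x : ℝ}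
    (hg : ContinuousOn g (uIcc x 1)) (hh : ContinuousOn h (uIcc x 1)) :
    rlIntRight α g x - rlIntRight α h x = rlIntRight α (g - h) x := by
  have hker := intervalIntegrable_sub_rpow hα x 1
  rw [rlIntRight, rlIntRight, rlIntRight, ← mul_sub,
    ← intervalIntegral.integral_sub (hker.mul_continuousOn hg) (hker.mul_continuousOn hh)]
  simp only [Pi.sub_apply, mul_sub]

/-- The right-hand side is `ₓI_1^α` applied to the constant `M`. -/
lemma abs_rlIntRight_le (hα : 0 < α) {g : ℝ → ℝ} {x M : ℝ} (hx : x ≤ 1)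
    (hM : ∀ τ ∈ Ioc x 1, |g τ| ≤ M) :
    |rlIntRight α g x| ≤ M * (1 - x) ^ α / Real.Gamma (α + 1) := by
  have hΓ : 0 < Real.Gamma α := Real.Gamma_pos_of_pos hα
  have hint : |∫ τ in x..(1 : ℝ), (τ - x) ^ (α - 1) * g τ| ≤ M * ((1 - x) ^ α / α) := by
    calc |∫ τ in x..(1 : ℝ), (τ - x) ^ (α - 1) * g τ|
        ≤ ∫ τ in x..(1 : ℝ), (τ - x) ^ (α - 1) * M := by
          refine intervalIntegral.norm_integral_le_of_norm_le (E := ℝ) hx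
            (.of_forall fun τ hτ => ?_) ((intervalIntegrable_sub_rpow hα x 1).mul_const M)
          have hker : 0 ≤ (τ - x) ^ (α - 1) := Real.rpow_nonneg (by linarith [hτ.1]) _
          rw [Real.norm_eq_abs, abs_mul, abs_of_nonneg hker]
          exact mul_le_mul_of_nonneg_left (hM τ hτ) hker
      _ = M * ((1 - x) ^ α / α) := by
          rw [intervalIntegral.integral_mul_const, integral_sub_rpow hα, mul_comm]
  rw [rlIntRight, abs_mul, abs_of_pos (one_div_pos.mpr hΓ), Real.Gamma_add_one hα.ne']
  calc 1 / Real.Gamma α * |∫ τ in x..(1 : ℝ), (τ - x) ^ (α - 1) * g τ|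
      ≤ 1 / Real.Gamma α * (M * ((1 - x) ^ α / α)) := by gcongr
    _ = M * (1 - x) ^ α / (α * Real.Gamma α) := by field_simp

theorem tendstoUniformlyOn_rlIntRight (hα : 0 < α) {ι : Type*} {p : Filter ι}
    {F : ι → ℝ → ℝ} {f : ℝ → ℝ} {a : ℝ} (hF : ∀ i, ContinuousOn (F i) (Icc a 1))
    (hf : ContinuousOn f (Icc a 1)) (h : TendstoUniformlyOn F f p (Icc a 1)) :
    TendstoUniformlyOn (fun i => rlIntRight α (F i)) (rlIntRight α f) p (Icc a 1) := by
  rcases lt_or_ge 1 a with ha | ha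
  · rw [Icc_eq_empty_of_lt ha]; exact tendstoUniformlyOn_empty
  set C := (1 - a) ^ α / Real.Gamma (α + 1)
  have hΓ : 0 < Real.Gamma (α + 1) := Real.Gamma_pos_of_pos (by linarith)
  have hC : 0 ≤ C := div_nonneg (Real.rpow_nonneg (by linarith) _) hΓ.le
  rw [Metric.tendstoUniformlyOn_iff] at h ⊢
  intro ε hε
  filter_upwards [h (ε / (C + 1)) (by positivity)] with i hi x hx
  have hsub : uIcc x 1 ⊆ Icc a 1 := by rw [uIcc_of_le hx.2]; exact Icc_subset_Icc_left hx.1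
  have hdiff : ∀ τ ∈ Ioc x 1, |(f - F i) τ| ≤ ε / (C + 1) := fun τ hτ =>
    (hi τ ⟨hx.1.trans hτ.1.le, hτ.2⟩).le
  have hxa : (1 - x) ^ α ≤ (1 - a) ^ α :=
    Real.rpow_le_rpow (by linarith [hx.2]) (by linarith [hx.1]) hα.le
  rw [Real.dist_eq, rlIntRight_sub hα (hf.mono hsub) ((hF i).mono hsub)]
  calc |rlIntRight α (f - F i) x| ≤ ε / (C + 1) * (1 - x) ^ α / Real.Gamma (α + 1) :=
        abs_rlIntRight_le hα hx.2 hdiff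
    _ ≤ ε / (C + 1) * C := by
        rw [mul_div_assoc]; gcongr; exact div_le_div_of_nonneg_right hxa hΓ.le
    _ < ε := by
        rw [div_mul_eq_mul_div, div_lt_iff₀ (by positivity)]; nlinarith

end RiemannLiouville

lemma continuous_bern (n : ℕ) (f : ℝ → ℝ) : Continuous (bern n f) := by
  unfold bern
  fun_prop

lemma bern_eq_bernsteinApproximation (n : ℕ) {f : ℝ → ℝ} {g : C(I, ℝ)}
    (hg : ∀ x : I, g x = f x) (x : I) :
    bern n f x = bernsteinApproximation n g x := by
  rw [bernsteinApproximation.apply, bern, Finset.sum_range]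
  refine Finset.sum_congr rfl fun k _ => ?_
  rw [bernstein_apply, hg]
  simp only [bernstein.z, smul_eq_mul]
  ring

theorem tendstoUniformlyOn_bern {f : ℝ → ℝ} (hf : ContinuousOn f (Icc 0 1)) :
    TendstoUniformlyOn (fun n => bern n f) f atTop (Icc 0 1) := by
  set g : C(I, ℝ) := ⟨(Icc 0 1).domRestrict f, hf.domRestrict⟩
  rw [tendstoUniformlyOn_iff_tendstoUniformly_comp_coe]
  convert ContinuousMap.tendsto_iff_tendstoUniformly.mp (bernsteinApproximation_uniform g) using 1
  · funext n x
    exact bern_eq_bernsteinApproximation n (fun _ => rfl) x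
  · rfl

/-- For `f ∈ C[0,1]` and `α > 0`, the right Riemann--Liouville fractional integrals
of the Bernstein polynomials of `f` converge uniformly on `[0,1]` to `ₓI_1^α f`. -/
theorem rlIntRight_bernstein_uniform_convergence (α : ℝ) (hα : 0 < α)
    (f : ℝ → ℝ) (hf : ContinuousOn f (Set.Icc 0 1)) :
    TendstoUniformlyOn (fun n x => rlIntRight α (bern n f) x)
      (fun x => rlIntRight α f x) Filter.atTop (Set.Icc 0 1) :=
  tendstoUniformlyOn_rlIntRight hα (fun n => (continuous_bern n f).continuousOn) hf
    (tendstoUniformlyOn_bern hf)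
end
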